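/- Let c > 0 and λ > 0. There exists a constant d = d_{c,λ} > 0, depending only on c and λ, such that for every K > 0 and every f : ℝ → ℝ satisfying condition (2.1), twice differentiable on ℝ∖{0}, and with −a(x) ≤ c x for all x > 0, one has for every x > 0: sup_{x ≤ y ≤ e^λ x} f'(a(y)) ≥ d · ( −(M f)'(x) ). -/

import Mathlib

open MeasureTheory Set Filter
open scoped ENNReal Topology

/-- Uncentered Hardy–Littlewood maximal function (without absolute values):
`M f x = sup_{a < x < b} (1/(b-a)) ∫_a^b f`. -/
noncomputable def maxFn (f : ℝ → ℝ) (x : ℝ) : ℝ :=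
  sSup {z : ℝ | ∃ a b : ℝ, a < x ∧ x < b ∧ z = (b - a)⁻¹ * ∫ y in a..b, f y}

/-- The variation of `g` on an open set `U`:
`var_U(g) = sup { -∫_U g φ' : φ ∈ C¹_c(U), |φ| ≤ 1 }`, valued in `ℝ≥0∞`. -/
noncomputable def evar (U : Set ℝ) (g : ℝ → ℝ) : ℝ≥0∞ :=
  ⨆ (φ : ℝ → ℝ) (_ : ContDiff ℝ 1 φ ∧ HasCompactSupport φ ∧ tsupport φ ⊆ U ∧ ∀ x, |φ x| ≤ 1),
    ENNReal.ofReal (-∫ x in U, g x * deriv φ x)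

/-- `g` is the weak derivative of `f` on `ℝ`. -/
def HasWeakDeriv (f g : ℝ → ℝ) : Prop :=
  LocallyIntegrable f volume ∧ LocallyIntegrable g volume ∧
    ∀ φ : ℝ → ℝ, ContDiff ℝ 1 φ → HasCompactSupport φ →
      ∫ x, f x * deriv φ x = -∫ x, g x * φ x

/-- Condition (2.1): for all `x < y` with `0 ∉ (x,y)`,
`1/K ≤ −sign(x+y)·(f(y)−f(x))/(y−x) ≤ K`. -/
def Cond21 (K : ℝ) (f : ℝ → ℝ) : Prop :=
  ∀ x y : ℝ, x < y → (0:ℝ) ∉ Set.Ioo x y →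
    1 / K ≤ -Real.sign (x + y) * ((f y - f x) / (y - x)) ∧
      -Real.sign (x + y) * ((f y - f x) / (y - x)) ≤ K

/-- `a` is the map assigning to each `x ≠ 0` the (unique) point `a x` on the other side of
the origin such that `M f x` equals the average of `f` over the interval between `a x` and `x`. -/
def IsArgOf (f : ℝ → ℝ) (a : ℝ → ℝ) : Prop :=
  ∀ x : ℝ, x ≠ 0 →
    ((0 < x → a x < 0) ∧ (x < 0 → 0 < a x)) ∧
    maxFn f x = (x - a x)⁻¹ * ∫ t in (a x)..x, f t

/-- `f` is twice differentiable on `ℝ \ {0}`. -/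
def TwiceDiffOffZero (f : ℝ → ℝ) : Prop :=
  ∀ x : ℝ, x ≠ 0 → DifferentiableAt ℝ f x ∧ DifferentiableAt ℝ (deriv f) x



section StatementAux

variable {K c : ℝ} {f : ℝ → ℝ} {a : ℝ → ℝ}

lemma fslope_neg (hK : 0 < K) (h21 : Cond21 K f) {u v : ℝ} (h : u < v) (hv : v ≤ 0) :
    (v - u) / K ≤ f v - f u ∧ f v - f u ≤ K * (v - u) := by
  have hs : u + v < 0 := by linarith
  have hm : (0:ℝ) ∉ Set.Ioo u v := fun ⟨h1, h2⟩ => by linarith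
  have h' := h21 u v h hm
  rw [Real.sign_of_neg hs] at h'
  obtain ⟨h1, h2⟩ := h'
  simp only [neg_neg, one_mul] at h1 h2
  have hvu : 0 < v - u := by linarith
  constructor
  · have := mul_le_mul_of_nonneg_right h1 hvu.le
    rw [div_mul_cancel₀ _ (ne_of_gt hvu)] at this
    calc (v - u) / K = 1 / K * (v - u) := by ring
      _ ≤ _ := this
  · have := mul_le_mul_of_nonneg_right h2 hvu.le
    rw [div_mul_cancel₀ _ (ne_of_gt hvu)] at this
    linarith

lemma fslope_pos (hK : 0 < K) (h21 : Cond21 K f) {u v : ℝ} (h : u < v) (hu : 0 ≤ u) :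
    (v - u) / K ≤ f u - f v ∧ f u - f v ≤ K * (v - u) := by
  have hs : 0 < u + v := by linarith
  have hm : (0:ℝ) ∉ Set.Ioo u v := fun ⟨h1, h2⟩ => by linarith
  have h' := h21 u v h hm
  rw [Real.sign_of_pos hs] at h'
  obtain ⟨h1, h2⟩ := h'
  have hvu : 0 < v - u := by linarith
  have e1 : -1 * ((f v - f u) / (v - u)) = (f u - f v) / (v - u) := by ring
  rw [e1] at h1 h2
  constructor
  · have := mul_le_mul_of_nonneg_right h1 hvu.le
    rw [div_mul_cancel₀ _ (ne_of_gt hvu)] at this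
    calc (v - u) / K = 1 / K * (v - u) := by ring
      _ ≤ _ := this
  · have := mul_le_mul_of_nonneg_right h2 hvu.le
    rw [div_mul_cancel₀ _ (ne_of_gt hvu)] at this
    linarith

lemma f_cont (hK : 0 < K) (h21 : Cond21 K f) (hdf : TwiceDiffOffZero f) : Continuous f := by
  rw [continuous_iff_continuousAt]
  intro t
  rcases eq_or_ne t 0 with rfl | ht
  · have key : ∀ s : ℝ, |f s - f 0| ≤ K * |s| := by
      intro s
      rcases lt_trichotomy s 0 with hs | rfl | hs
      · have h := fslope_neg hK h21 hs le_rfl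
        have hp : 0 ≤ f 0 - f s := le_trans (div_nonneg (by linarith) hK.le) h.1
        have h2 := h.2
        have e : K * (0 - s) = K * (-s) := by ring
        rw [abs_sub_comm, abs_of_nonneg hp, abs_of_neg hs]
        linarith
      · simp
      · have h := fslope_pos hK h21 hs le_rfl
        have hp : 0 ≤ f 0 - f s := le_trans (div_nonneg (by linarith) hK.le) h.1
        have h2 := h.2
        have e : K * (s - 0) = K * s := by ring
        rw [abs_sub_comm, abs_of_nonneg hp, abs_of_pos hs]
        linarith
    rw [Metric.continuousAt_iff]
    intro ε hε
    refine ⟨ε / (K + 1), by positivity, fun {s} hs => ?_⟩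
    simp only [Real.dist_eq] at hs ⊢
    have h4 : K * (ε / (K + 1)) < ε := by
      rw [← mul_div_assoc, div_lt_iff₀ (by positivity)]
      nlinarith
    have h5 : K * |s - 0| < K * (ε / (K + 1)) := mul_lt_mul_of_pos_left hs hK
    have h6 := key s
    simp only [sub_zero] at h5 h6
    linarith
  · exact (hdf t ht).1.continuousAt

lemma f_le_f0 (hK : 0 < K) (h21 : Cond21 K f) (t : ℝ) : f t ≤ f 0 := by
  rcases lt_trichotomy t 0 with hs | rfl | hs
  · have h := (fslope_neg hK h21 hs le_rfl).1
    have := div_nonneg (by linarith : (0:ℝ) ≤ 0 - t) hK.le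
    linarith
  · exact le_refl _
  · have h := (fslope_pos hK h21 hs le_rfl).1
    have := div_nonneg (by linarith : (0:ℝ) ≤ t - 0) hK.le
    linarith

lemma f_mono_neg (hK : 0 < K) (h21 : Cond21 K f) {u v : ℝ} (h : u < v) (hv : v ≤ 0) :
    f u < f v := by
  have h1 := (fslope_neg hK h21 h hv).1
  have := div_pos (by linarith : (0:ℝ) < v - u) hK
  linarith

lemma f_anti_pos (hK : 0 < K) (h21 : Cond21 K f) {u v : ℝ} (h : u < v) (hu : 0 ≤ u) :
    f v < f u := by
  have h1 := (fslope_pos hK h21 h hu).1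
  have := div_pos (by linarith : (0:ℝ) < v - u) hK
  linarith

lemma deriv_f_bounds (hK : 0 < K) (h21 : Cond21 K f) (hdf : TwiceDiffOffZero f)
    {w : ℝ} (hw : w < 0) : 1 / K ≤ deriv f w ∧ deriv f w ≤ K := by
  have hd : HasDerivAt f (deriv f w) w := ((hdf w (ne_of_lt hw)).1).hasDerivAt
  rw [hasDerivAt_iff_tendsto_slope] at hd
  have hd' : Tendsto (slope f w) (𝓝[>] w) (𝓝 (deriv f w)) :=
    hd.mono_left (nhdsWithin_mono w (fun u hu => ne_of_gt hu))
  have hev : ∀ᶠ u in 𝓝[>] w, slope f w u ∈ Set.Icc (1/K) K := by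
    filter_upwards [Ioo_mem_nhdsGT_of_mem (Set.left_mem_Ico.2 hw)] with u hu
    obtain ⟨hu1, hu2⟩ := hu
    have h := fslope_neg hK h21 hu1 hu2.le
    have hwu : 0 < u - w := by linarith
    rw [slope_def_field]
    constructor
    · rw [le_div_iff₀ hwu]
      have e : 1 / K * (u - w) = (u - w) / K := by ring
      linarith [h.1]
    · rw [div_le_iff₀ hwu]
      linarith [h.2]
  have := isClosed_Icc.mem_of_tendsto hd' hev
  exact ⟨this.1, this.2⟩

lemma maxFn_bddAbove (hK : 0 < K) (h21 : Cond21 K f) (hc : Continuous f) (x : ℝ) :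
    BddAbove {z : ℝ | ∃ a b : ℝ, a < x ∧ x < b ∧ z = (b - a)⁻¹ * ∫ y in a..b, f y} := by
  refine ⟨f 0, fun z hz => ?_⟩
  obtain ⟨a, b, hax, hxb, rfl⟩ := hz
  have hab : 0 < b - a := by linarith [hax.trans hxb]
  have h1 : ∫ y in a..b, f y ≤ (b - a) * f 0 := by
    have := intervalIntegral.integral_mono_on (by linarith : a ≤ b) (hc.intervalIntegrable a b)
      (intervalIntegrable_const : IntervalIntegrable (fun _ => f 0) volume a b) (fun t _ => f_le_f0 hK h21 t)
    simpa [smul_eq_mul, mul_comm] using this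
  calc (b - a)⁻¹ * ∫ y in a..b, f y ≤ (b - a)⁻¹ * ((b - a) * f 0) :=
        mul_le_mul_of_nonneg_left h1 (inv_nonneg.2 hab.le)
    _ = f 0 := by field_simp

lemma maxFn_ge (hK : 0 < K) (h21 : Cond21 K f) (hc : Continuous f) {x u : ℝ} (hu : u < x) :
    (x - u)⁻¹ * ∫ t in u..x, f t ≤ maxFn f x := by
  have hmem : ∀ b, x < b → (b - u)⁻¹ * ∫ t in u..b, f t ≤ maxFn f x := fun b hb =>
    le_csSup (maxFn_bddAbove hK h21 hc x) ⟨u, b, hu, hb, rfl⟩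
  have hten : Tendsto (fun b => (b - u)⁻¹ * ∫ t in u..b, f t) (𝓝[>] x)
      (𝓝 ((x - u)⁻¹ * ∫ t in u..x, f t)) := by
    apply Tendsto.mono_left _ nhdsWithin_le_nhds
    apply Tendsto.mul
    · exact (Tendsto.sub tendsto_id tendsto_const_nhds).inv₀ (by intro h; linarith [sub_eq_zero.1 h])
    · exact ((intervalIntegral.continuous_primitive (fun a b => hc.intervalIntegrable a b) u).tendsto x)
  refine le_of_tendsto hten ?_
  filter_upwards [self_mem_nhdsWithin] with b hb using hmem b hb

lemma avg_eq_max_foc (hK : 0 < K) (h21 : Cond21 K f) (hc : Continuous f) {z v : ℝ} (hv : v < z)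
    (hfoc : (z - v)⁻¹ * ∫ t in v..z, f t = maxFn f z) : f v = maxFn f z := by
  set g : ℝ → ℝ := fun u => (z - u)⁻¹ * ((∫ t in (0:ℝ)..z, f t) - ∫ t in (0:ℝ)..u, f t) with hg
  have hgeq : ∀ u, g u = (z - u)⁻¹ * ∫ t in u..z, f t := by
    intro u
    rw [hg]
    simp only
    rw [intervalIntegral.integral_interval_sub_left (hc.intervalIntegrable 0 z)
      (hc.intervalIntegrable 0 u)]
  have hmax : IsLocalMax g v := by
    filter_upwards [Iio_mem_nhds hv] with u hu
    rw [hgeq u, hgeq v, hfoc]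
    exact maxFn_ge hK h21 hc hu
  have hzv : z - v ≠ 0 := by intro h; linarith [sub_eq_zero.1 h]
  have hP : HasDerivAt (fun u => ∫ t in (0:ℝ)..u, f t) (f v) v :=
    intervalIntegral.integral_hasDerivAt_right (hc.intervalIntegrable 0 v)
      hc.stronglyMeasurable.stronglyMeasurableAtFilter hc.continuousAt
  have h1 : HasDerivAt (fun u => (z - u)⁻¹) ((z - v)⁻¹ ^ 2) v := by
    have hd : HasDerivAt (fun u => z - u) (-1) v := (hasDerivAt_id v).const_sub z
    have := hd.inv hzv
    exact this.congr_deriv (by rw [inv_pow, neg_neg, one_div])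
  have h2 : HasDerivAt (fun u => (∫ t in (0:ℝ)..z, f t) - ∫ t in (0:ℝ)..u, f t) (-f v) v :=
    hP.const_sub _
  have hg' : HasDerivAt g ((z - v)⁻¹ ^ 2 * ((∫ t in (0:ℝ)..z, f t) - ∫ t in (0:ℝ)..v, f t)
      + (z - v)⁻¹ * (-f v)) v := h1.mul h2
  have h0 : deriv g v = 0 := hmax.deriv_eq_zero
  rw [hg'.deriv] at h0
  have hI : (z - v)⁻¹ * ((∫ t in (0:ℝ)..z, f t) - ∫ t in (0:ℝ)..v, f t) = maxFn f z := by
    rw [← hgeq v] at hfoc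
    exact hfoc
  set J := (∫ t in (0:ℝ)..z, f t) - ∫ t in (0:ℝ)..v, f t
  have key : (z - v)⁻¹ * J = f v := by
    have h3 : (z - v) * ((z - v)⁻¹ ^ 2 * J) + (z - v) * ((z - v)⁻¹ * -f v) = 0 := by
      rw [← mul_add, h0, mul_zero]
    have e2 : (z - v) * ((z - v)⁻¹ ^ 2 * J) = (z - v)⁻¹ * J := by
      field_simp
    have e3 : (z - v) * ((z - v)⁻¹ * -f v) = -f v := by field_simp
    rw [e2, e3] at h3
    linarith
  rw [hI] at key
  exact key.symm

lemma foc_a (hK : 0 < K) (h21 : Cond21 K f) (hc : Continuous f) (ha : IsArgOf f a)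
    {y : ℝ} (hy : 0 < y) : f (a y) = maxFn f y := by
  have h := ha y hy.ne'
  exact avg_eq_max_foc hK h21 hc ((h.1.1 hy).trans hy) h.2.symm

lemma arg_unique (hK : 0 < K) (h21 : Cond21 K f) (hc : Continuous f) (ha : IsArgOf f a)
    {z v : ℝ} (hz : 0 < z) (hv : v < 0)
    (hfoc : (z - v)⁻¹ * ∫ t in v..z, f t = maxFn f z) : v = a z := by
  have h1 : f v = maxFn f z := avg_eq_max_foc hK h21 hc (hv.trans hz) hfoc
  have h2 : f (a z) = maxFn f z := foc_a hK h21 hc ha hz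
  have haz : a z < 0 := (ha z hz.ne').1.1 hz
  by_contra hne
  rcases lt_or_gt_of_ne hne with h | h
  · exact absurd (h1.trans h2.symm) (ne_of_lt (f_mono_neg hK h21 h haz.le))
  · exact absurd (h2.trans h1.symm) (ne_of_lt (f_mono_neg hK h21 h hv.le))

lemma maxFn_anti (hK : 0 < K) (h21 : Cond21 K f) (hc : Continuous f) (ha : IsArgOf f a)
    {y y' : ℝ} (hy : 0 < y) (hyy : y ≤ y') : maxFn f y' ≤ maxFn f y := by
  rcases eq_or_lt_of_le hyy with rfl | hyy'
  · exact le_refl _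
  have hy' : 0 < y' := hy.trans hyy'
  obtain ⟨⟨hv0, -⟩, hM'⟩ := ha y' hy'.ne'
  set v := a y' with hv
  have hvy : v < y := (hv0 hy').trans hy
  have hvy' : v < y' := hvy.trans hyy'
  have hsplit : (∫ t in v..y, f t) + ∫ t in y..y', f t = ∫ t in v..y', f t :=
    intervalIntegral.integral_add_adjacent_intervals (hc.intervalIntegrable v y)
      (hc.intervalIntegrable y y')
  have h1 : ∫ t in v..y, f t ≤ (y - v) * maxFn f y := by
    have := maxFn_ge hK h21 hc hvy
    have hpos : (0:ℝ) < y - v := by linarith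
    calc ∫ t in v..y, f t = (y - v) * ((y - v)⁻¹ * ∫ t in v..y, f t) := by field_simp
      _ ≤ (y - v) * maxFn f y := mul_le_mul_of_nonneg_left this hpos.le
  have h2 : ∫ t in y..y', f t ≤ (y' - y) * maxFn f y' := by
    have := maxFn_ge hK h21 hc (u := y) hyy'
    have hpos : (0:ℝ) < y' - y := by linarith
    calc ∫ t in y..y', f t = (y' - y) * ((y' - y)⁻¹ * ∫ t in y..y', f t) := by field_simp
      _ ≤ (y' - y) * maxFn f y' := mul_le_mul_of_nonneg_left this hpos.le
  have hM'' : (y' - v) * maxFn f y' = ∫ t in v..y', f t := by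
    rw [hM']
    have hpos : (0:ℝ) < y' - v := by linarith
    field_simp
  have hyv : (0:ℝ) < y - v := by linarith
  nlinarith [hM'', hsplit, h1, h2]

lemma a_anti (hK : 0 < K) (h21 : Cond21 K f) (hc : Continuous f) (ha : IsArgOf f a)
    {y y' : ℝ} (hy : 0 < y) (hyy : y ≤ y') : a y' ≤ a y := by
  by_contra hlt
  push_neg at hlt
  have hy' : 0 < y' := lt_of_lt_of_le hy hyy
  have h1 : f (a y) < f (a y') := f_mono_neg hK h21 hlt ((ha y' hy'.ne').1.1 hy').le
  have h2 : f (a y) = maxFn f y := foc_a hK h21 hc ha hy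
  have h3 : f (a y') = maxFn f y' := foc_a hK h21 hc ha hy'
  have := maxFn_anti hK h21 hc ha hy hyy
  linarith

lemma integral_eq_P (hc : Continuous f) (u v : ℝ) :
    ∫ t in u..v, f t = (∫ t in (0:ℝ)..v, f t) - ∫ t in (0:ℝ)..u, f t :=
  (intervalIntegral.integral_interval_sub_left (hc.intervalIntegrable 0 v)
    (hc.intervalIntegrable 0 u)).symm

lemma a_tendsto_left (hK : 0 < K) (h21 : Cond21 K f) (hc : Continuous f) (ha : IsArgOf f a)
    (hcpos : 0 < c) (hac : ∀ x : ℝ, 0 < x → -a x ≤ c * x) {y0 : ℝ} (hy0 : 0 < y0) :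
    Tendsto a (𝓝[<] y0) (𝓝 (a y0)) := by
  set P : ℝ → ℝ := fun t => ∫ u in (0:ℝ)..t, f u with hP
  have hPc : Continuous P := intervalIntegral.continuous_primitive
    (fun u v => hc.intervalIntegrable u v) 0
  set m := y0 / 2 with hm
  have hmy : m < y0 := by rw [hm]; linarith
  have hmpos : 0 < m := by rw [hm]; linarith
  set mid := (m + y0) / 2 with hmid
  have hmidI : mid ∈ Ioo m y0 := ⟨by rw [hmid]; linarith, by rw [hmid]; linarith⟩
  have hmidpos : 0 < mid := lt_trans hmpos hmidI.1
  have hne : (Ioo m y0).Nonempty := ⟨mid, hmidI⟩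
  have hanti : AntitoneOn a (Ioo m y0) := fun u hu u' _ huu' =>
    a_anti hK h21 hc ha (lt_trans hmpos hu.1) huu'
  have hbdd : BddBelow (a '' Ioo m y0) := by
    refine ⟨-(c * y0), ?_⟩
    rintro _ ⟨y, hy, rfl⟩
    have hypos : 0 < y := lt_trans hmpos hy.1
    have h1 := hac y hypos
    have h2 : c * y ≤ c * y0 := mul_le_mul_of_nonneg_left hy.2.le hcpos.le
    linarith
  set A := sInf (a '' Ioo m y0) with hA
  have hten : Tendsto a (𝓝[<] y0) (𝓝 A) := hanti.tendsto_nhdsWithin_Ioo_left hne hbdd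
  have hA_neg : A < 0 :=
    lt_of_le_of_lt (csInf_le hbdd ⟨mid, hmidI, rfl⟩) ((ha mid hmidpos.ne').1.1 hmidpos)
  have hid : Tendsto (fun y : ℝ => y) (𝓝[<] y0) (𝓝 y0) := tendsto_id.mono_left nhdsWithin_le_nhds
  have hfa : Tendsto (fun y => f (a y)) (𝓝[<] y0) (𝓝 (f A)) := (hc.tendsto A).comp hten
  have hPa : Tendsto (fun y => P (a y)) (𝓝[<] y0) (𝓝 (P A)) := (hPc.tendsto A).comp hten
  have hdenne : y0 - A ≠ 0 := by intro h; nlinarith [sub_eq_zero.1 h]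
  have havg : Tendsto (fun y => (y - a y)⁻¹ * (P y - P (a y))) (𝓝[<] y0)
      (𝓝 ((y0 - A)⁻¹ * (P y0 - P A))) :=
    ((hid.sub hten).inv₀ hdenne).mul (((hPc.tendsto y0).comp hid).sub hPa)
  have hev : ∀ᶠ y in 𝓝[<] y0, f (a y) = (y - a y)⁻¹ * (P y - P (a y)) := by
    filter_upwards [Ioo_mem_nhdsLT hmy] with y hy
    have hypos : 0 < y := lt_trans hmpos hy.1
    rw [foc_a hK h21 hc ha hypos, (ha y hypos.ne').2, integral_eq_P hc]
  have heq : f A = (y0 - A)⁻¹ * (P y0 - P A) := tendsto_nhds_unique (hfa.congr' hev) havg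
  have hge : maxFn f y0 ≤ f A := by
    refine ge_of_tendsto hfa ?_
    filter_upwards [Ioo_mem_nhdsLT hmy] with y hy
    have hypos : 0 < y := lt_trans hmpos hy.1
    rw [foc_a hK h21 hc ha hypos]
    exact maxFn_anti hK h21 hc ha hypos hy.2.le
  have hle : (y0 - A)⁻¹ * ∫ t in A..y0, f t ≤ maxFn f y0 :=
    maxFn_ge hK h21 hc (lt_trans hA_neg hy0)
  have hfoc : (y0 - A)⁻¹ * ∫ t in A..y0, f t = maxFn f y0 := by
    refine le_antisymm hle ?_
    rw [integral_eq_P hc, ← heq]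
    exact hge
  have := arg_unique hK h21 hc ha hy0 hA_neg hfoc
  rwa [← this]

lemma a_tendsto_right (hK : 0 < K) (h21 : Cond21 K f) (hc : Continuous f) (ha : IsArgOf f a)
    (hcpos : 0 < c) (hac : ∀ x : ℝ, 0 < x → -a x ≤ c * x) {y0 : ℝ} (hy0 : 0 < y0) :
    Tendsto a (𝓝[>] y0) (𝓝 (a y0)) := by
  set P : ℝ → ℝ := fun t => ∫ u in (0:ℝ)..t, f u with hP
  have hPc : Continuous P := intervalIntegral.continuous_primitive
    (fun u v => hc.intervalIntegrable u v) 0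
  have hy0' : y0 < y0 + 1 := by linarith
  have haz : a y0 < 0 := (ha y0 hy0.ne').1.1 hy0
  have hne : (Ioo y0 (y0 + 1)).Nonempty := ⟨y0 + 1/2, by constructor <;> simp <;> linarith⟩
  have hanti : AntitoneOn a (Ioo y0 (y0 + 1)) := fun u hu u' _ huu' =>
    a_anti hK h21 hc ha (lt_trans hy0 hu.1) huu'
  have hbddA : BddAbove (a '' Ioo y0 (y0 + 1)) := by
    refine ⟨a y0, ?_⟩
    rintro _ ⟨y, hy, rfl⟩
    exact a_anti hK h21 hc ha hy0 hy.1.le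
  set A := sSup (a '' Ioo y0 (y0 + 1)) with hA
  have hten : Tendsto a (𝓝[>] y0) (𝓝 A) := hanti.tendsto_nhdsWithin_Ioo_right hne hbddA
  have hA_le : A ≤ a y0 := csSup_le (hne.image a) (fun _ ⟨y, hy, e⟩ => e ▸ a_anti hK h21 hc ha hy0 hy.1.le)
  have hA_neg : A < 0 := lt_of_le_of_lt hA_le haz
  have hid : Tendsto (fun y : ℝ => y) (𝓝[>] y0) (𝓝 y0) := tendsto_id.mono_left nhdsWithin_le_nhds
  have hfa : Tendsto (fun y => f (a y)) (𝓝[>] y0) (𝓝 (f A)) := (hc.tendsto A).comp hten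
  have hPa : Tendsto (fun y => P (a y)) (𝓝[>] y0) (𝓝 (P A)) := (hPc.tendsto A).comp hten
  have hdenne : y0 - A ≠ 0 := by intro h; nlinarith [sub_eq_zero.1 h]
  have havg : Tendsto (fun y => (y - a y)⁻¹ * (P y - P (a y))) (𝓝[>] y0)
      (𝓝 ((y0 - A)⁻¹ * (P y0 - P A))) :=
    ((hid.sub hten).inv₀ hdenne).mul (((hPc.tendsto y0).comp hid).sub hPa)
  have hev : ∀ᶠ y in 𝓝[>] y0, f (a y) = (y - a y)⁻¹ * (P y - P (a y)) := by
    filter_upwards [Ioo_mem_nhdsGT hy0'] with y hy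
    have hypos : 0 < y := lt_trans hy0 hy.1
    rw [foc_a hK h21 hc ha hypos, (ha y hypos.ne').2, integral_eq_P hc]
  have heq : f A = (y0 - A)⁻¹ * (P y0 - P A) := tendsto_nhds_unique (hfa.congr' hev) havg
  have hge : maxFn f y0 ≤ f A := by
    have hd0 : y0 - a y0 ≠ 0 := by intro h; nlinarith [sub_eq_zero.1 h]
    have hcomp : Tendsto (fun y => (y - a y0)⁻¹ * (P y - P (a y0))) (𝓝[>] y0)
        (𝓝 ((y0 - a y0)⁻¹ * (P y0 - P (a y0)))) :=
      ((hid.sub tendsto_const_nhds).inv₀ hd0).mul (((hPc.tendsto y0).comp hid).sub tendsto_const_nhds)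
    have hM0 : (y0 - a y0)⁻¹ * (P y0 - P (a y0)) = maxFn f y0 := by
      rw [← integral_eq_P hc, ← (ha y0 hy0.ne').2]
    have hevle : ∀ᶠ y in 𝓝[>] y0, (y - a y0)⁻¹ * (P y - P (a y0)) ≤ f (a y) := by
      filter_upwards [Ioo_mem_nhdsGT hy0'] with y hy
      have hypos : 0 < y := lt_trans hy0 hy.1
      rw [foc_a hK h21 hc ha hypos, ← integral_eq_P hc]
      exact maxFn_ge hK h21 hc (lt_trans haz hypos)
    have := le_of_tendsto_of_tendsto hcomp hfa hevle
    rwa [hM0] at this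
  have hle : (y0 - A)⁻¹ * ∫ t in A..y0, f t ≤ maxFn f y0 :=
    maxFn_ge hK h21 hc (lt_trans hA_neg hy0)
  have hfoc : (y0 - A)⁻¹ * ∫ t in A..y0, f t = maxFn f y0 := by
    refine le_antisymm hle ?_
    rw [integral_eq_P hc, ← heq]
    exact hge
  have := arg_unique hK h21 hc ha hy0 hA_neg hfoc
  rwa [← this]

lemma a_continuousAt (hK : 0 < K) (h21 : Cond21 K f) (hc : Continuous f) (ha : IsArgOf f a)
    (hcpos : 0 < c) (hac : ∀ x : ℝ, 0 < x → -a x ≤ c * x) {y0 : ℝ} (hy0 : 0 < y0) :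
    ContinuousAt a y0 :=
  continuousAt_iff_continuous_left_right.2
    ⟨continuousWithinAt_Iio_iff_Iic.1 (a_tendsto_left hK h21 hc ha hcpos hac hy0),
     continuousWithinAt_Ioi_iff_Ici.1 (a_tendsto_right hK h21 hc ha hcpos hac hy0)⟩

lemma final_arith (c E x M fx MX A0 aX S : ℝ)
    (hc : 0 < c) (hE : 1 < E) (hx : 0 < x) (hA0 : A0 < 0) (haXc : -aX ≤ c * (E * x))
    (haa' : aX < A0) (hMf : fx < M)
    (hcomb : MX * (E * x - aX) ≤ (x - aX) * M + (E * x - x) * fx)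
    (hS : (M - MX) / (A0 - aX) ≤ S) :
    (E - 1) / ((1 + c) * c * E ^ 2) * ((M - fx) / (x - A0)) ≤ S := by
  have hXx : x < E * x := by nlinarith
  have haX : aX < 0 := lt_trans haa' hA0
  have hXaX : 0 < E * x - aX := by nlinarith
  have key2 : (E * x - x) * (M - fx) ≤ (M - MX) * (E * x - aX) := by nlinarith [hcomb]
  have hgap : 0 < M - MX := by
    by_contra hcon
    push_neg at hcon
    have h5 : (M - MX) * (E * x - aX) ≤ 0 :=
      mul_nonpos_of_nonpos_of_nonneg (by linarith) hXaX.le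
    nlinarith [key2, mul_pos (show (0:ℝ) < E * x - x by linarith)
      (show (0:ℝ) < M - fx by linarith)]
  have hAa : 0 < A0 - aX := by linarith
  have hL : 0 < x - A0 := by linarith
  refine le_trans ?_ hS
  set d := (E - 1) / ((1 + c) * c * E ^ 2) with hd_def
  have hd_pos : 0 < d := div_pos (by linarith) (by positivity)
  rw [← mul_div_assoc, div_le_div_iff₀ hL hAa]
  have hd_eq : d * ((1 + c) * c * E ^ 2) = E - 1 := by
    rw [hd_def]
    field_simp
  have hq : (E - 1) * (M - fx) ≤ (M - MX) * ((1 + c) * E) := by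
    have e1 : (E * x - x) * (M - fx) = ((E - 1) * (M - fx)) * x := by ring
    have hb : E * x - aX ≤ (1 + c) * (E * x) := by nlinarith
    have e2 : (M - MX) * (E * x - aX) ≤ ((M - MX) * ((1 + c) * E)) * x := by
      calc (M - MX) * (E * x - aX) ≤ (M - MX) * ((1 + c) * (E * x)) :=
            mul_le_mul_of_nonneg_left hb hgap.le
        _ = ((M - MX) * ((1 + c) * E)) * x := by ring
    have h3 := (e1 ▸ key2).trans e2
    exact le_of_mul_le_mul_right h3 hx
  have step1 : d * (M - fx) * (A0 - aX) ≤ d * (M - fx) * (c * E * x) := by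
    have hbound : A0 - aX ≤ c * E * x := by nlinarith
    exact mul_le_mul_of_nonneg_left hbound (mul_nonneg hd_pos.le (by linarith))
  have step2 : d * (M - fx) * (c * E * x) ≤ (M - MX) * x := by
    have hcE : (0:ℝ) < (1 + c) * E := by positivity
    have hkey : d * (M - fx) * (c * E) ≤ M - MX := by
      rw [← mul_le_mul_iff_of_pos_right hcE]
      calc d * (M - fx) * (c * E) * ((1 + c) * E) = d * ((1 + c) * c * E ^ 2) * (M - fx) := by
            ring
        _ = (E - 1) * (M - fx) := by rw [hd_eq]
        _ ≤ (M - MX) * ((1 + c) * E) := hq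
    calc d * (M - fx) * (c * E * x) = (d * (M - fx) * (c * E)) * x := by ring
      _ ≤ (M - MX) * x := mul_le_mul_of_nonneg_right hkey hx.le
  have step3 : (M - MX) * x ≤ (M - MX) * (x - A0) := by
    have : x ≤ x - A0 := by linarith
    exact mul_le_mul_of_nonneg_left this hgap.le
  linarith

lemma arith_gap (c E x M fx MX aX : ℝ)
    (hc : 0 < c) (hE : 1 < E) (hx : 0 < x) (haX : aX < 0) (hMf : fx < M)
    (hcomb : MX * (E * x - aX) ≤ (x - aX) * M + (E * x - x) * fx) : 0 < M - MX := by
  have hXx : x < E * x := by nlinarith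
  have hXaX : 0 < E * x - aX := by nlinarith
  have key2 : (E * x - x) * (M - fx) ≤ (M - MX) * (E * x - aX) := by nlinarith [hcomb]
  by_contra hcon
  push_neg at hcon
  have h5 : (M - MX) * (E * x - aX) ≤ 0 :=
    mul_nonpos_of_nonpos_of_nonneg (by linarith) hXaX.le
  nlinarith [key2, mul_pos (show (0:ℝ) < E * x - x by linarith)
    (show (0:ℝ) < M - fx by linarith)]

end StatementAux

set_option maxHeartbeats 1600000 in
/-- For all `c, λ > 0` there is a constant `d = d_{c,λ} > 0` such that for every `K > 0` and
every `f` satisfying (2.1), twice differentiable off `0`, with `−a(x) ≤ c·x` for `x > 0`: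
for every `x > 0`, `sup_{x ≤ y ≤ e^λ x} f'(a(y)) ≥ d·(−(M f)'(x))`. -/
theorem statement13 (c lam : ℝ) (hc : 0 < c) (hlam : 0 < lam) :
    ∃ d : ℝ, 0 < d ∧
      ∀ K : ℝ, 0 < K → ∀ f : ℝ → ℝ, Cond21 K f → TwiceDiffOffZero f →
        ∀ a : ℝ → ℝ, IsArgOf f a → (∀ x : ℝ, 0 < x → -a x ≤ c * x) →
          ∀ x : ℝ, 0 < x →
            d * (-(deriv (maxFn f) x)) ≤
              sSup ((fun y => deriv f (a y)) '' Set.Icc x (Real.exp lam * x)) := by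
  set E := Real.exp lam with hE_def
  have hE : 1 < E := Real.one_lt_exp_iff.2 hlam
  have hd_pos : 0 < (E - 1) / ((1 + c) * c * E ^ 2) :=
    div_pos (by linarith) (by positivity)
  refine ⟨(E - 1) / ((1 + c) * c * E ^ 2), hd_pos, ?_⟩
  intro K hK f h21 hdf a ha hac x hx
  have hcf : Continuous f := f_cont hK h21 hdf
  have hxX : x < E * x := by nlinarith
  have hXpos : 0 < E * x := lt_trans hx hxX
  have hax : a x < 0 := (ha x hx.ne').1.1 hx
  have haX : a (E * x) < 0 := (ha (E * x) hXpos.ne').1.1 hXpos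
  -- the sup
  have hSbdd : BddAbove ((fun y => deriv f (a y)) '' Set.Icc x (E * x)) := by
    refine ⟨K, ?_⟩
    rintro _ ⟨y, hy, rfl⟩
    have hypos : 0 < y := lt_of_lt_of_le hx hy.1
    exact (deriv_f_bounds hK h21 hdf ((ha y hypos.ne').1.1 hypos)).2
  set S := sSup ((fun y => deriv f (a y)) '' Set.Icc x (E * x)) with hS_def
  have hSx : deriv f (a x) ≤ S := le_csSup hSbdd ⟨x, ⟨le_refl x, hxX.le⟩, rfl⟩
  have hSpos : 0 < S :=
    lt_of_lt_of_le (lt_of_lt_of_le (div_pos one_pos hK) (deriv_f_bounds hK h21 hdf hax).1) hSx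
  by_cases hdm : DifferentiableAt ℝ (maxFn f) x
  swap
  · rw [deriv_zero_of_not_differentiableAt hdm]
    simp only [neg_zero, mul_zero]
    exact hSpos.le
  -- differentiable case : compute the derivative
  set P : ℝ → ℝ := fun t => ∫ u in (0:ℝ)..t, f u with hP_def
  have hPc : Continuous P := intervalIntegral.continuous_primitive
    (fun u v => hcf.intervalIntegrable u v) 0
  set A0 := a x with hA0_def
  set M := maxFn f x with hM_def
  have hL : 0 < x - A0 := by linarith
  have hLne : x - A0 ≠ 0 := ne_of_gt hL
  have hM : M = (x - A0)⁻¹ * (P x - P A0) := by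
    rw [hM_def, (ha x hx.ne').2, integral_eq_P hcf]
  set φ : ℝ → ℝ := fun y => (y - A0)⁻¹ * (P y - P A0) with hφ_def
  have hφx : φ x = M := by rw [hφ_def]; exact hM.symm
  have h1 : HasDerivAt (fun y => (y - A0)⁻¹) (-1 / (x - A0) ^ 2) x := by
    have hd : HasDerivAt (fun y => y - A0) 1 x := (hasDerivAt_id x).sub_const A0
    have := hd.inv hLne
    exact this
  have hPd : HasDerivAt P (f x) x :=
    intervalIntegral.integral_hasDerivAt_right (hcf.intervalIntegrable 0 x)
      (hcf.stronglyMeasurable.stronglyMeasurableAtFilter) hcf.continuousAt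
  have h2 : HasDerivAt (fun y => P y - P A0) (f x) x := hPd.sub_const _
  have hφd : HasDerivAt φ (-1 / (x - A0) ^ 2 * (P x - P A0) + (x - A0)⁻¹ * f x) x := h1.mul h2
  have hmin : IsLocalMin (fun y => maxFn f y - φ y) x := by
    filter_upwards [Ioi_mem_nhds hx] with y hy
    have h3 : φ y ≤ maxFn f y := by
      have haxy : A0 < y := lt_trans hax hy
      have := maxFn_ge hK h21 hcf haxy
      rw [integral_eq_P hcf] at this
      exact this
    have h4 : maxFn f x - φ x = 0 := by rw [hφx, ← hM_def]; ring
    simp only [h4]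
    linarith
  have hder0 : deriv (fun y => maxFn f y - φ y) x = 0 := hmin.deriv_eq_zero
  rw [deriv_fun_sub hdm hφd.differentiableAt, hφd.deriv] at hder0
  have hPM : P x - P A0 = (x - A0) * M := by
    rw [hM]
    field_simp
  have hDval : deriv (maxFn f) x = (f x - M) / (x - A0) := by
    have he : deriv (maxFn f) x = -1 / (x - A0) ^ 2 * (P x - P A0) + (x - A0)⁻¹ * f x := by
      linarith
    rw [he, hPM]
    field_simp
    ring
  rw [hDval]
  have hnegD : -((f x - M) / (x - A0)) = (M - f x) / (x - A0) := by ring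
  rw [hnegD]
  rcases le_or_gt M (f x) with hMf | hMf
  · have hnp : (M - f x) / (x - A0) ≤ 0 := div_nonpos_of_nonpos_of_nonneg (by linarith) hL.le
    calc (E - 1) / ((1 + c) * c * E ^ 2) * ((M - f x) / (x - A0)) ≤ 0 :=
          mul_nonpos_of_nonneg_of_nonpos hd_pos.le hnp
      _ ≤ S := hSpos.le
  -- main case
  have haXc : -a (E * x) ≤ c * (E * x) := hac (E * x) hXpos
  have haa : a (E * x) ≤ A0 := a_anti hK h21 hcf ha hx hxX.le
  have hMX : maxFn f (E * x) * (E * x - a (E * x)) = ∫ t in (a (E * x))..(E * x), f t := by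
    rw [(ha (E * x) hXpos.ne').2]
    have hpos : (0:ℝ) < E * x - a (E * x) := by linarith
    field_simp
  have hsplit : (∫ t in (a (E * x))..x, f t) + ∫ t in x..(E * x), f t
      = ∫ t in (a (E * x))..(E * x), f t :=
    intervalIntegral.integral_add_adjacent_intervals (hcf.intervalIntegrable _ _)
      (hcf.intervalIntegrable _ _)
  have h1' : ∫ t in (a (E * x))..x, f t ≤ (x - a (E * x)) * M := by
    have hgood := maxFn_ge hK h21 hcf (show a (E * x) < x by linarith)
    have hpos : (0:ℝ) < x - a (E * x) := by linarith
    calc ∫ t in (a (E * x))..x, f t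
        = (x - a (E * x)) * ((x - a (E * x))⁻¹ * ∫ t in (a (E * x))..x, f t) := by
          field_simp
      _ ≤ (x - a (E * x)) * M := mul_le_mul_of_nonneg_left hgood hpos.le
  have h2' : ∫ t in x..(E * x), f t ≤ (E * x - x) * f x := by
    have hmono := intervalIntegral.integral_mono_on hxX.le (hcf.intervalIntegrable x (E * x))
      (intervalIntegrable_const : IntervalIntegrable (fun _ => f x) volume x (E * x))
      (fun t ht => ?_)
    · simpa [smul_eq_mul, mul_comm] using hmono
    · rcases eq_or_lt_of_le ht.1 with rfl | hlt
      · exact le_refl _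
      · exact (f_anti_pos hK h21 hlt hx.le).le
  have hcomb : maxFn f (E * x) * (E * x - a (E * x))
      ≤ (x - a (E * x)) * M + (E * x - x) * f x := by
    rw [hMX, ← hsplit]
    linarith
  have hgap : 0 < M - maxFn f (E * x) :=
    arith_gap c E x M (f x) (maxFn f (E * x)) (a (E * x)) hc hE hx haX hMf hcomb
  have haa' : a (E * x) < A0 := by
    rcases eq_or_lt_of_le haa with he | h
    · exfalso
      have heq2 : maxFn f (E * x) = M := by
        rw [← foc_a hK h21 hcf ha hXpos, he, hA0_def, foc_a hK h21 hcf ha hx, hM_def]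
      linarith
    · exact h
  obtain ⟨ξ, hξ, hξd⟩ := exists_deriv_eq_slope f haa' hcf.continuousOn
    (fun t ht => ((hdf t (ne_of_lt (lt_trans ht.2 hax))).1).differentiableWithinAt)
  have hfA0 : f A0 = M := foc_a hK h21 hcf ha hx
  have hfaX : f (a (E * x)) = maxFn f (E * x) := foc_a hK h21 hcf ha hXpos
  rw [hfA0, hfaX] at hξd
  -- ξ is attained by a
  have hconta : ContinuousOn a (Set.Icc x (E * x)) := fun y hy =>
    (a_continuousAt hK h21 hcf ha hc hac (lt_of_lt_of_le hx hy.1)).continuousWithinAt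
  obtain ⟨y, hyI, hya⟩ := intermediate_value_Icc' hxX.le hconta ⟨hξ.1.le, hξ.2.le⟩
  have hSy : deriv f (a y) ≤ S := le_csSup hSbdd ⟨y, hyI, rfl⟩
  rw [hya, hξd] at hSy
  exact final_arith c E x M (f x) (maxFn f (E * x)) A0 (a (E * x)) S
    hc hE hx hax haXc haa' hMf hcomb hSy
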